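/- arXiv:1605.03289 — 3 statements merged into one kernel-verified Lean document; each statement's English description precedes it below -/
import Mathlib

section
/- Robbins–Siegmund theorem: Let (Ω, 𝓕, (𝓕_k)_{k∈ℕ₀}, ℙ) be a filtered probability space and let (U_k), (Y_k), (Z_k), (W_k) be sequences of nonnegative real-valued random variables on Ω such that (i) U_k, Y_k, Z_k, W_k are 𝓕_k-measurable for each k, (ii) 𝔼(Y_{k+1} | 𝓕_k) ≤ (1 + U_k) Y_k − Z_k + W_k almost surely for each k, and (iii) Σ_k U_k < ∞ and Σ_k W_k < ∞ almost surely. Then (Y_k) converges almost surely to a finite (i.e., real-valued) random variable Y, and Σ_k Z_k < ∞ almost surely. -/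
/-!
Dividing `Y k` by `∏ j < k, (1 + U j)`, which converges since `∑ U` does, reduces everything to
the case `U = 0`. Then `n + Y k + ∑ j < k, (Z j - W j)` is a supermartingale that stays
nonnegative while the partial sums of `W` stay below `n`; stopped at the first time they exceed
`n`, it is integrable and nonnegative, hence converges a.s. For a.e. `ω` some `n` exceeds `∑ W`
at `ω`, so there the process is never stopped, and nonnegativity of `Y` and `Z` turns its
convergence into `∑ Z < ∞` and convergence of `Y`.
-/

open MeasureTheory Filter Finset
open scoped Topology

namespace RobbinsSiegmund

theorem tendsto_and_summable_of_tendsto_add_sum {y z w : ℕ → ℝ} (hy : ∀ k, 0 ≤ y k)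
    (hz : ∀ k, 0 ≤ z k) (hw : Summable w)
    (hx : ∃ c, Tendsto (fun k => y k + ∑ j ∈ range k, (z j - w j)) atTop (𝓝 c)) :
    (∃ c, Tendsto y atTop (𝓝 c)) ∧ Summable z := by
  obtain ⟨c, hc⟩ := hx
  obtain ⟨B, hB⟩ := hc.bddAbove_range
  obtain ⟨C, hC⟩ := hw.hasSum.tendsto_sum_nat.bddAbove_range
  have hzs : Summable z := summable_of_sum_range_le (c := B + C) hz fun k => by
    have hxB : y k + ∑ j ∈ range k, (z j - w j) ≤ B := hB (Set.mem_range_self k)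
    have hwC : ∑ j ∈ range k, w j ≤ C := hC (Set.mem_range_self k)
    rw [sum_sub_distrib] at hxB
    linarith [hy k]
  refine ⟨⟨c - ∑' j, z j + ∑' j, w j, ?_⟩, hzs⟩
  refine ((hc.sub hzs.hasSum.tendsto_sum_nat).add hw.hasSum.tendsto_sum_nat).congr fun k => ?_
  rw [sum_sub_distrib]
  ring

theorem one_le_prod_range_one_add {u : ℕ → ℝ} (hu : ∀ k, 0 ≤ u k) (k : ℕ) :
    1 ≤ ∏ j ∈ range k, (1 + u j) :=
  one_le_prod fun j _ => le_add_of_nonneg_right (hu j)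

theorem monotone_prod_range_one_add {u : ℕ → ℝ} (hu : ∀ k, 0 ≤ u k) :
    Monotone fun k => ∏ j ∈ range k, (1 + u j) :=
  monotone_nat_of_le_succ fun k => by
    rw [prod_range_succ]
    exact le_mul_of_one_le_right (zero_le_one.trans (one_le_prod_range_one_add hu k))
      (le_add_of_nonneg_right (hu k))

theorem tendsto_and_summable_of_inv_mul {p y z : ℕ → ℝ} (hp : Monotone p) (hp0 : ∀ k, 0 < p k)
    (hpc : ∃ c, Tendsto p atTop (𝓝 c)) (hz : ∀ k, 0 ≤ z k)
    (hy : ∃ c, Tendsto (fun k => (p k)⁻¹ * y k) atTop (𝓝 c))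
    (hzs : Summable fun k => (p (k + 1))⁻¹ * z k) :
    (∃ c, Tendsto y atTop (𝓝 c)) ∧ Summable z := by
  obtain ⟨a, ha⟩ := hpc
  obtain ⟨b, hb⟩ := hy
  refine ⟨⟨a * b, (ha.mul hb).congr fun k => mul_inv_cancel_left₀ (hp0 k).ne' _⟩, ?_⟩
  refine (hzs.mul_left a).of_nonneg_of_le hz fun k => ?_
  calc z k = p (k + 1) * ((p (k + 1))⁻¹ * z k) := (mul_inv_cancel_left₀ (hp0 _).ne' _).symm
    _ ≤ a * ((p (k + 1))⁻¹ * z k) :=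
      mul_le_mul_of_nonneg_right (hp.ge_of_tendsto ha _)
        (mul_nonneg (inv_nonneg.2 (hp0 _).le) (hz k))

theorem _root_.MeasureTheory.Supermartingale.exists_ae_tendsto_of_nonneg {Ω : Type*}
    {m0 : MeasurableSpace Ω} {μ : Measure Ω} [IsFiniteMeasure μ] {ℱ : Filtration ℕ m0}
    {f : ℕ → Ω → ℝ} (hf : Supermartingale f ℱ μ) (hnn : ∀ n, 0 ≤ᵐ[μ] f n) :
    ∀ᵐ ω ∂μ, ∃ c, Tendsto (fun n => f n ω) atTop (𝓝 c) := by
  have hbdd : ∀ n, eLpNorm ((-f) n) 1 μ ≤ ENNReal.ofReal (∫ ω, f 0 ω ∂μ) := fun n => by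
    rw [Pi.neg_apply, eLpNorm_neg, eLpNorm_one_eq_lintegral_enorm,
      ← ofReal_integral_norm_eq_lintegral_enorm (hf.integrable n)]
    refine ENNReal.ofReal_le_ofReal ?_
    calc ∫ ω, ‖f n ω‖ ∂μ = ∫ ω, f n ω ∂μ :=
          integral_congr_ae <| (hnn n).mono fun ω h => Real.norm_of_nonneg h
      _ ≤ ∫ ω, f 0 ω ∂μ := by simpa using hf.setIntegral_le (Nat.zero_le n) MeasurableSet.univ
  filter_upwards [hf.neg.exists_ae_tendsto_of_bdd hbdd] with ω ⟨c, hc⟩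
  exact ⟨-c, by simpa using hc.neg⟩

variable {Ω : Type*} {m0 : MeasurableSpace Ω}

structure AlmostSupermartingale (μ : Measure Ω) (ℱ : Filtration ℕ m0) (U Y Z W : ℕ → Ω → ℝ) :
    Prop where
  nonneg_U : ∀ k ω, 0 ≤ U k ω
  nonneg_Y : ∀ k ω, 0 ≤ Y k ω
  nonneg_Z : ∀ k ω, 0 ≤ Z k ω
  nonneg_W : ∀ k ω, 0 ≤ W k ω
  adapted_U : StronglyAdapted ℱ U
  adapted_Y : StronglyAdapted ℱ Y
  adapted_Z : StronglyAdapted ℱ Z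
  adapted_W : StronglyAdapted ℱ W
  integrable_Y : ∀ k, Integrable (Y k) μ
  condExp_le : ∀ k, ∀ᵐ ω ∂μ, (μ[Y (k + 1) | ℱ k]) ω ≤ (1 + U k ω) * Y k ω - Z k ω + W k ω

section Truncation

variable (Y Z W : ℕ → Ω → ℝ) (n : ℕ)

def budgetSet (j : ℕ) : Set Ω := {ω | ∑ i ∈ range (j + 1), W i ω ≤ n}

noncomputable def truncIncrement (j : ℕ) : Ω → ℝ :=
  (budgetSet W n j).indicator fun ω => Y (j + 1) ω - Y j ω + (Z j ω - W j ω)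

noncomputable def truncDrift (j : ℕ) : Ω → ℝ :=
  (budgetSet W n j).indicator fun ω => Z j ω - W j ω - Y j ω

/-- The process `n + Y k + ∑ j < k, (Z j - W j)` stopped when the partial sums of `W` first
exceed `n`: the budget sets decrease in `j`, so once an increment is masked, so are all later
ones. -/
noncomputable def truncProcess (k : ℕ) (ω : Ω) : ℝ :=
  n + Y 0 ω + ∑ j ∈ range k, truncIncrement Y Z W n j ω

variable {Y Z W n}

theorem budgetSet_antitone (hWnn : ∀ k ω, 0 ≤ W k ω) : Antitone (budgetSet (Ω := Ω) W n) :=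
  fun i j hij ω hω => le_trans
    (sum_le_sum_of_subset_of_nonneg (range_subset_range.2 (by omega)) fun k _ _ => hWnn k ω) hω

theorem truncProcess_succ (k : ℕ) (ω : Ω) :
    truncProcess Y Z W n (k + 1) ω = truncProcess Y Z W n k ω + truncIncrement Y Z W n k ω := by
  rw [truncProcess, truncProcess, sum_range_succ, ← add_assoc]

theorem truncProcess_eq {k : ℕ} {ω : Ω} (h : ∀ j < k, ω ∈ budgetSet W n j) :
    truncProcess Y Z W n k ω = n + Y k ω + ∑ j ∈ range k, (Z j ω - W j ω) := by
  simp only [truncProcess, truncIncrement]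
  rw [sum_congr rfl fun j hj => Set.indicator_of_mem (h j (mem_range.1 hj)) _,
    sum_add_distrib, sum_range_sub (fun j => Y j ω)]
  ring

theorem truncProcess_nonneg (hYnn : ∀ k ω, 0 ≤ Y k ω) (hZnn : ∀ k ω, 0 ≤ Z k ω)
    (hWnn : ∀ k ω, 0 ≤ W k ω) (k : ℕ) (ω : Ω) : 0 ≤ truncProcess Y Z W n k ω := by
  induction k with
  | zero => simpa [truncProcess] using add_nonneg n.cast_nonneg (hYnn 0 ω)
  | succ k ih =>
    by_cases hω : ω ∈ budgetSet W n k
    · have hbudget : ∑ j ∈ range (k + 1), W j ω ≤ n := hω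
      rw [truncProcess_eq fun j hj => budgetSet_antitone hWnn (by omega) hω, sum_sub_distrib]
      linarith [hYnn (k + 1) ω, sum_nonneg fun j (_ : j ∈ range (k + 1)) => hZnn j ω]
    · rwa [truncProcess_succ, truncIncrement, Set.indicator_of_notMem hω, add_zero]

theorem truncIncrement_eq_add (j : ℕ) :
    truncIncrement Y Z W n j = (budgetSet W n j).indicator (Y (j + 1)) + truncDrift Y Z W n j := by
  rw [truncIncrement, truncDrift, ← Set.indicator_add']
  congr 1
  funext ω
  simp only [Pi.add_apply]
  ring

variable {ℱ : Filtration ℕ m0}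

theorem measurableSet_budgetSet (hW : StronglyAdapted ℱ W) (j : ℕ) :
    MeasurableSet[ℱ j] (budgetSet W n j) :=
  measurableSet_le (Finset.measurable_sum _ fun i hi =>
    ((hW i).mono (ℱ.mono (by simp at hi; omega))).measurable) measurable_const

theorem stronglyMeasurable_truncDrift (hY : StronglyAdapted ℱ Y) (hZ : StronglyAdapted ℱ Z)
    (hW : StronglyAdapted ℱ W) (j : ℕ) : StronglyMeasurable[ℱ j] (truncDrift Y Z W n j) :=
  (((hZ j).sub (hW j)).sub (hY j)).indicator (measurableSet_budgetSet hW j)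

theorem stronglyAdapted_truncProcess (hY : StronglyAdapted ℱ Y) (hZ : StronglyAdapted ℱ Z)
    (hW : StronglyAdapted ℱ W) : StronglyAdapted ℱ (truncProcess Y Z W n) := by
  intro k
  have hinc : ∀ j, StronglyMeasurable[ℱ (j + 1)] (truncIncrement Y Z W n j) := fun j => by
    rw [truncIncrement_eq_add]
    exact ((hY (j + 1)).indicator (ℱ.mono j.le_succ _ (measurableSet_budgetSet hW j))).add
      ((stronglyMeasurable_truncDrift hY hZ hW j).mono (ℱ.mono j.le_succ))
  exact (stronglyMeasurable_const.add ((hY 0).mono (ℱ.mono k.zero_le))).add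
    (Finset.stronglyMeasurable_fun_sum _ fun j hj => (hinc j).mono (ℱ.mono (mem_range.1 hj)))

variable {μ : Measure Ω} (h : AlmostSupermartingale μ ℱ 0 Y Z W)
include h

theorem AlmostSupermartingale.condExp_le_of_zero (k : ℕ) :
    ∀ᵐ ω ∂μ, (μ[Y (k + 1) | ℱ k]) ω ≤ Y k ω - Z k ω + W k ω := by
  simpa using h.condExp_le k

theorem AlmostSupermartingale.ae_le_add_of_zero (k : ℕ) : ∀ᵐ ω ∂μ, Z k ω ≤ Y k ω + W k ω := by
  filter_upwards [condExp_nonneg (μ := μ) (m := ℱ k) (ae_of_all _ (h.nonneg_Y (k + 1))),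
    h.condExp_le_of_zero k] with ω hnn hle
  linarith [show (0 : ℝ) ≤ (μ[Y (k + 1) | ℱ k]) ω from hnn]

variable [IsFiniteMeasure μ]

theorem AlmostSupermartingale.integrable_truncDrift (j : ℕ) :
    Integrable (truncDrift Y Z W n j) μ := by
  refine ((h.integrable_Y j).add (integrable_const (n : ℝ))).mono'
    ((stronglyMeasurable_truncDrift h.adapted_Y h.adapted_Z h.adapted_W j).mono
      (ℱ.le j)).aestronglyMeasurable ?_
  filter_upwards [h.ae_le_add_of_zero j] with ω hZ
  rw [Pi.add_apply, truncDrift]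
  by_cases hω : ω ∈ budgetSet W n j
  · have hWn : W j ω ≤ n :=
      (single_le_sum (fun i _ => h.nonneg_W i ω) (self_mem_range_succ j)).trans hω
    rw [Set.indicator_of_mem hω, Real.norm_eq_abs, abs_le]
    constructor <;> linarith [h.nonneg_Y j ω, h.nonneg_Z j ω, h.nonneg_W j ω]
  · rw [Set.indicator_of_notMem hω, norm_zero]
    exact add_nonneg (h.nonneg_Y j ω) n.cast_nonneg

theorem AlmostSupermartingale.integrable_truncIncrement (j : ℕ) :
    Integrable (truncIncrement Y Z W n j) μ := by
  rw [truncIncrement_eq_add]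
  exact ((h.integrable_Y (j + 1)).indicator (ℱ.le j _ (measurableSet_budgetSet h.adapted_W j))).add
    (h.integrable_truncDrift j)

theorem AlmostSupermartingale.condExp_truncIncrement_nonpos (j : ℕ) :
    μ[truncIncrement Y Z W n j | ℱ j] ≤ᵐ[μ] 0 := by
  have hG := measurableSet_budgetSet (n := n) h.adapted_W j
  have hYG := (h.integrable_Y (j + 1)).indicator (ℱ.le j _ hG)
  rw [truncIncrement_eq_add]
  filter_upwards [condExp_add hYG (h.integrable_truncDrift j) (ℱ j),
    condExp_indicator (h.integrable_Y (j + 1)) hG, h.condExp_le_of_zero j] with ω hadd hind hle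
  rw [hadd, Pi.add_apply, hind, condExp_of_stronglyMeasurable (ℱ.le j)
    (stronglyMeasurable_truncDrift h.adapted_Y h.adapted_Z h.adapted_W j)
    (h.integrable_truncDrift j)]
  by_cases hω : ω ∈ budgetSet W n j
  · simp only [truncDrift, Set.indicator_of_mem hω, Pi.zero_apply]
    linarith
  · simp [truncDrift, Set.indicator_of_notMem hω]

theorem AlmostSupermartingale.supermartingale_truncProcess :
    Supermartingale (truncProcess Y Z W n) ℱ μ := by
  have hint : ∀ k, Integrable (truncProcess Y Z W n k) μ := fun k =>
    ((integrable_const _).add (h.integrable_Y 0)).add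
      (integrable_finsetSum _ fun j _ => h.integrable_truncIncrement j)
  refine supermartingale_nat (stronglyAdapted_truncProcess h.adapted_Y h.adapted_Z h.adapted_W)
    hint fun k => ?_
  have hsucc : truncProcess Y Z W n (k + 1) = truncProcess Y Z W n k + truncIncrement Y Z W n k :=
    funext (truncProcess_succ k)
  filter_upwards [condExp_add (hint k) (h.integrable_truncIncrement k) (ℱ k),
    h.condExp_truncIncrement_nonpos k] with ω hadd hle
  rw [hsucc, hadd, Pi.add_apply, condExp_of_stronglyMeasurable (ℱ.le k)
    (stronglyAdapted_truncProcess h.adapted_Y h.adapted_Z h.adapted_W k) (hint k)]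
  linarith [show (μ[truncIncrement Y Z W n k | ℱ k]) ω ≤ 0 from hle]

theorem AlmostSupermartingale.ae_tendsto_and_summable_of_zero
    (hW : ∀ᵐ ω ∂μ, Summable fun k => W k ω) :
    ∀ᵐ ω ∂μ, (∃ c, Tendsto (fun k => Y k ω) atTop (𝓝 c)) ∧ Summable fun k => Z k ω := by
  have hX : ∀ᵐ ω ∂μ, ∀ n : ℕ, ∃ c, Tendsto (fun k => truncProcess Y Z W n k ω) atTop (𝓝 c) :=
    ae_all_iff.2 fun n => h.supermartingale_truncProcess.exists_ae_tendsto_of_nonneg fun k =>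
      ae_of_all _ (truncProcess_nonneg h.nonneg_Y h.nonneg_Z h.nonneg_W k)
  filter_upwards [hX, hW] with ω hXω hWω
  obtain ⟨n, hn⟩ := exists_nat_ge (∑' k, W k ω)
  have hmem : ∀ j, ω ∈ budgetSet W n j := fun j =>
    (hWω.sum_le_tsum _ fun i _ => h.nonneg_W i ω).trans hn
  obtain ⟨c, hc⟩ := hXω n
  refine tendsto_and_summable_of_tendsto_add_sum (h.nonneg_Y · ω) (h.nonneg_Z · ω) hWω
    ⟨c - n, (hc.sub_const (n : ℝ)).congr fun k => ?_⟩
  rw [truncProcess_eq fun j _ => hmem j]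
  ring

end Truncation

section Discount

variable {U : ℕ → Ω → ℝ}

noncomputable def discount (U : ℕ → Ω → ℝ) (k : ℕ) (ω : Ω) : ℝ := (∏ j ∈ range k, (1 + U j ω))⁻¹

theorem discount_pos (hU : ∀ k ω, 0 ≤ U k ω) (k : ℕ) (ω : Ω) : 0 < discount U k ω :=
  inv_pos.2 (zero_lt_one.trans_le (one_le_prod_range_one_add (hU · ω) k))

theorem discount_le_one (hU : ∀ k ω, 0 ≤ U k ω) (k : ℕ) (ω : Ω) : discount U k ω ≤ 1 :=
  inv_le_one_of_one_le₀ (one_le_prod_range_one_add (hU · ω) k)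

theorem discount_succ_mul (hU : ∀ k ω, 0 ≤ U k ω) (k : ℕ) (ω : Ω) :
    discount U (k + 1) ω * (1 + U k ω) = discount U k ω := by
  have hne : 1 + U k ω ≠ 0 := by linarith [hU k ω]
  rw [discount, discount, prod_range_succ, mul_inv, mul_assoc, inv_mul_cancel₀ hne, mul_one]

variable {ℱ : Filtration ℕ m0}

theorem stronglyMeasurable_discount (hU : StronglyAdapted ℱ U) {j k : ℕ} (hjk : j ≤ k + 1) :
    StronglyMeasurable[ℱ k] (discount U j) :=
  (Finset.measurable_prod _ fun i hi => (measurable_const.add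
    ((hU i).mono (ℱ.mono (by simp at hi; omega))).measurable)).inv.stronglyMeasurable

variable {μ : Measure Ω} {Y Z W : ℕ → Ω → ℝ}

theorem integrable_discount_mul (hU : ∀ k ω, 0 ≤ U k ω) (hUa : StronglyAdapted ℱ U)
    (hYnn : ∀ k ω, 0 ≤ Y k ω) (hYa : StronglyAdapted ℱ Y) (hY : ∀ k, Integrable (Y k) μ)
    (k : ℕ) : Integrable (discount U k * Y k) μ :=
  (hY k).mono' ((((stronglyMeasurable_discount hUa k.le_succ).mul (hYa k)).mono
    (ℱ.le k)).aestronglyMeasurable) (ae_of_all _ fun ω => by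
      rw [Pi.mul_apply, Real.norm_of_nonneg (mul_nonneg (discount_pos hU k ω).le (hYnn k ω))]
      exact mul_le_of_le_one_left (hYnn k ω) (discount_le_one hU k ω))

theorem AlmostSupermartingale.discounted (h : AlmostSupermartingale μ ℱ U Y Z W) :
    AlmostSupermartingale μ ℱ 0 (fun k => discount U k * Y k)
      (fun k => discount U (k + 1) * Z k) (fun k => discount U (k + 1) * W k) where
  nonneg_U _ _ := le_rfl
  nonneg_Y k ω := mul_nonneg (discount_pos h.nonneg_U k ω).le (h.nonneg_Y k ω)
  nonneg_Z k ω := mul_nonneg (discount_pos h.nonneg_U _ ω).le (h.nonneg_Z k ω)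
  nonneg_W k ω := mul_nonneg (discount_pos h.nonneg_U _ ω).le (h.nonneg_W k ω)
  adapted_U _ := stronglyMeasurable_const
  adapted_Y k := (stronglyMeasurable_discount h.adapted_U k.le_succ).mul (h.adapted_Y k)
  adapted_Z k := (stronglyMeasurable_discount h.adapted_U le_rfl).mul (h.adapted_Z k)
  adapted_W k := (stronglyMeasurable_discount h.adapted_U le_rfl).mul (h.adapted_W k)
  integrable_Y :=
    integrable_discount_mul h.nonneg_U h.adapted_U h.nonneg_Y h.adapted_Y h.integrable_Y
  condExp_le k := by
    filter_upwards [condExp_mul_of_stronglyMeasurable_left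
      (stronglyMeasurable_discount h.adapted_U le_rfl)
      (integrable_discount_mul h.nonneg_U h.adapted_U h.nonneg_Y h.adapted_Y h.integrable_Y (k + 1))
      (h.integrable_Y (k + 1)), h.condExp_le k] with ω hmul hle
    simp only [hmul, Pi.mul_apply, Pi.zero_apply, add_zero, one_mul]
    rw [← discount_succ_mul h.nonneg_U k ω]
    have := mul_le_mul_of_nonneg_left hle (discount_pos h.nonneg_U (k + 1) ω).le
    linarith

theorem AlmostSupermartingale.ae_tendsto_and_summable [IsFiniteMeasure μ]
    (h : AlmostSupermartingale μ ℱ U Y Z W) (hU : ∀ᵐ ω ∂μ, Summable fun k => U k ω)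
    (hW : ∀ᵐ ω ∂μ, Summable fun k => W k ω) :
    ∀ᵐ ω ∂μ, (∃ c, Tendsto (fun k => Y k ω) atTop (𝓝 c)) ∧ Summable fun k => Z k ω := by
  have hW' : ∀ᵐ ω ∂μ, Summable fun k => discount U (k + 1) ω * W k ω :=
    hW.mono fun ω hω => hω.of_nonneg_of_le (fun k => h.discounted.nonneg_W k ω)
      fun k => mul_le_of_le_one_left (h.nonneg_W k ω) (discount_le_one h.nonneg_U _ ω)
  filter_upwards [h.discounted.ae_tendsto_and_summable_of_zero hW', hU] with ω ⟨hY, hZ⟩ hUω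
  exact tendsto_and_summable_of_inv_mul (monotone_prod_range_one_add (h.nonneg_U · ω))
    (fun k => zero_lt_one.trans_le (one_le_prod_range_one_add (h.nonneg_U · ω) k))
    ⟨_, (Real.multipliable_one_add_of_summable hUω).hasProd.tendsto_prod_nat⟩
    (h.nonneg_Z · ω) hY hZ

end Discount

end RobbinsSiegmund

open RobbinsSiegmund

/-- Robbins–Siegmund theorem: if `(U k)`, `(Y k)`, `(Z k)`, `(W k)` are nonnegative
adapted sequences with `𝔼(Y (k+1) | ℱ k) ≤ (1 + U k) Y k - Z k + W k` a.s. and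
`∑ U k < ∞`, `∑ W k < ∞` a.s., then `Y k` converges a.s. to a finite random
variable and `∑ Z k < ∞` a.s. -/
theorem robbins_siegmund
    {Ω : Type*} {m0 : MeasurableSpace Ω} (μ : Measure Ω) [IsProbabilityMeasure μ]
    (ℱ : Filtration ℕ m0)
    (U Y Z W : ℕ → Ω → ℝ)
    (hUnn : ∀ k, ∀ ω, 0 ≤ U k ω) (hYnn : ∀ k, ∀ ω, 0 ≤ Y k ω)
    (hZnn : ∀ k, ∀ ω, 0 ≤ Z k ω) (hWnn : ∀ k, ∀ ω, 0 ≤ W k ω)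
    (hUmeas : ∀ k, StronglyMeasurable[ℱ k] (U k))
    (hYmeas : ∀ k, StronglyMeasurable[ℱ k] (Y k))
    (hZmeas : ∀ k, StronglyMeasurable[ℱ k] (Z k))
    (hWmeas : ∀ k, StronglyMeasurable[ℱ k] (W k))
    (hYint : ∀ k, Integrable (Y k) μ)
    (hcond : ∀ k, ∀ᵐ ω ∂μ,
      (μ[Y (k + 1) | ℱ k]) ω ≤ (1 + U k ω) * Y k ω - Z k ω + W k ω)
    (hU : ∀ᵐ ω ∂μ, Summable fun k => U k ω)
    (hW : ∀ᵐ ω ∂μ, Summable fun k => W k ω) :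
    ∃ Ylim : Ω → ℝ,
      (∀ᵐ ω ∂μ, Tendsto (fun k => Y k ω) atTop (nhds (Ylim ω))) ∧
      (∀ᵐ ω ∂μ, Summable fun k => Z k ω) := by
  have h : AlmostSupermartingale μ ℱ U Y Z W :=
    ⟨hUnn, hYnn, hZnn, hWnn, hUmeas, hYmeas, hZmeas, hWmeas, hYint, hcond⟩
  have hconv := h.ae_tendsto_and_summable hU hW
  exact ⟨fun ω => limUnder atTop (Y · ω), hconv.mono fun _ hω => tendsto_nhds_limUnder hω.1,
    hconv.mono fun _ hω => hω.2⟩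
end

section
/- Step-size bound for the proximal step under the growth condition: Let f : ℝ^d → ℝ be convex, let λ > 0, p ∈ ℝ^d and L > 0, and assume f(u) − f(v) ≤ L(1 + ‖u − p‖)‖u − v‖ for all u, v ∈ ℝ^d. If x ∈ ℝ^d and z is a minimizer of y ↦ f(y) + (1/(2λ))‖x − y‖², then ‖x − z‖ ≤ 2λ L (1 + ‖x − p‖). -/
/-- Step-size bound for the proximal step under the growth condition:
if `f u - f v ≤ L (1 + ‖u - p‖) ‖u - v‖` for all `u, v` and `z` minimizes
`y ↦ f y + (1/(2λ)) ‖x - y‖²`, then `‖x - z‖ ≤ 2 λ L (1 + ‖x - p‖)`. -/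
theorem prox_step_size_bound {d : ℕ}
    (f : EuclideanSpace ℝ (Fin d) → ℝ) (hconv : ConvexOn ℝ Set.univ f)
    (lam : ℝ) (hlam : 0 < lam) (p : EuclideanSpace ℝ (Fin d)) (L : ℝ) (hL : 0 < L)
    (hgrowth : ∀ u v : EuclideanSpace ℝ (Fin d),
      f u - f v ≤ L * (1 + ‖u - p‖) * ‖u - v‖)
    (x z : EuclideanSpace ℝ (Fin d))
    (hz : ∀ y : EuclideanSpace ℝ (Fin d),
      f z + (1 / (2 * lam)) * ‖x - z‖ ^ 2 ≤ f y + (1 / (2 * lam)) * ‖x - y‖ ^ 2) :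
    ‖x - z‖ ≤ 2 * lam * L * (1 + ‖x - p‖) := by
  have h1 := hz x
  simp only [sub_self, norm_zero] at h1
  have h2 : (1 / (2 * lam)) * ‖x - z‖ ^ 2 ≤ f x - f z := by linarith
  have h3 := hgrowth x z
  have hkey : (1 / (2 * lam)) * ‖x - z‖ ^ 2 ≤ L * (1 + ‖x - p‖) * ‖x - z‖ :=
    le_trans h2 h3
  rcases eq_or_lt_of_le (norm_nonneg (x - z)) with h0 | h0
  · rw [← h0]
    positivity
  · have := mul_le_mul_of_nonneg_left hkey (by positivity : (0:ℝ) ≤ 2 * lam)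
    rw [pow_two] at this
    have heq : 2 * lam * (1 / (2 * lam)) = 1 := by field_simp
    nlinarith [this, h0, hlam, heq]
end

section
/- One-step expected-decrease estimate for the stochastic proximal point algorithm: Let (S, 𝒮, μ) be a probability space and f : ℝ^d × S → ℝ with f(·, ξ) convex for each ξ and f(x, ·) measurable and μ-integrable for each x; set F(x) := ∫_S f(x, ξ) dμ(ξ). Assume there exist p ∈ ℝ^d and L ∈ L²(μ), L(ξ) > 0, such that f(u, ξ) − f(v, ξ) ≤ L(ξ)(1 + ‖u − p‖)‖u − v‖ for all u, v ∈ ℝ^d and all ξ ∈ S. Fix λ > 0, x ∈ ℝ^d, and for ξ ∈ S let J_λ^ξ x denote the unique minimizer of y ↦ f(y, ξ) + (1/(2λ))‖x − y‖². Then for every y ∈ ℝ^d there exists a constant C > 0 (depending only on y and p) such that ∫_S ‖J_λ^ξ x − y‖² dμ(ξ) ≤ (1 + 2Cλ²∫_S L(ξ)² dμ(ξ)) ‖x − y‖² − 2λ (F(x) − F(y)) + 2Cλ²∫_S L(ξ)² dμ(ξ). -/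
/-!
For fixed `ξ`, the resolvent objective `w ↦ f(w, ξ) + ‖x - w‖² / (2λ)` is `1/λ`-strongly convex,
so at its minimizer `J` it grows quadratically; this is the three-point inequality
`‖J - y‖² ≤ ‖x - y‖² - ‖x - J‖² + 2λ (f(y, ξ) - f(J, ξ))`. The growth condition bounds
`f(x, ξ) - f(J, ξ)` by `L(ξ) (1 + ‖x - p‖) ‖x - J‖`, and Young's inequality absorbs this into
`-‖x - J‖²` at the cost of `λ² L(ξ)² (1 + ‖x - p‖)² ≤ 2 C λ² L(ξ)² (‖x - y‖² + 1)` with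
`C = (1 + ‖y - p‖)²`. Integrating in `ξ` gives the estimate.
-/

open MeasureTheory Filter Set Topology

lemma one_add_norm_sub_sq_le {E : Type*} [SeminormedAddCommGroup E] (x y p : E) :
    (1 + ‖x - p‖) ^ 2 ≤ 2 * (1 + ‖y - p‖) ^ 2 * (‖x - y‖ ^ 2 + 1) := by
  have hb : 1 ≤ 1 + ‖y - p‖ := le_add_of_nonneg_right (norm_nonneg _)
  calc (1 + ‖x - p‖) ^ 2 ≤ (‖x - y‖ + (1 + ‖y - p‖)) ^ 2 := by
        gcongr ?_ ^ 2
        linarith [norm_sub_le_norm_sub_add_norm_sub x y p]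
    _ ≤ 2 * ‖x - y‖ ^ 2 + 2 * (1 + ‖y - p‖) ^ 2 := by
        linarith [sq_nonneg (‖x - y‖ - (1 + ‖y - p‖))]
    _ ≤ 2 * (1 + ‖y - p‖) ^ 2 * (‖x - y‖ ^ 2 + 1) := by
        nlinarith [one_le_pow₀ (n := 2) hb, sq_nonneg ‖x - y‖]

section StrongConvexity

variable {E : Type*} [NormedAddCommGroup E]

lemma StrongConvexOn.add_sq_norm_sub_le_of_isMinOn [NormedSpace ℝ E] {s : Set E} {m : ℝ}
    {f : E → ℝ} {y z : E} (hf : StrongConvexOn s m f) (hz : IsMinOn f s z) (hzs : z ∈ s)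
    (hys : y ∈ s) : f z + m / 2 * ‖y - z‖ ^ 2 ≤ f y := by
  have hseg : ∀ a ∈ Ioo (0 : ℝ) 1, f z + (1 - a) * (m / 2 * ‖y - z‖ ^ 2) ≤ f y := by
    rintro a ⟨ha₀, ha₁⟩
    have hconv := hf.2 hys hzs ha₀.le (sub_nonneg.2 ha₁.le) (add_sub_cancel a 1)
    have hmin : f z ≤ f (a • y + (1 - a) • z) := hz (hf.1 hys hzs ha₀.le (by linarith) (by ring))
    simp only [smul_eq_mul] at hconv
    nlinarith
  -- let the weight on `y` tend to `0`
  refine le_of_tendsto (x := 𝓝[>] 0) ?_ (eventually_of_mem (Ioo_mem_nhdsGT one_pos) hseg)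
  exact tendsto_nhdsWithin_of_tendsto_nhds (Continuous.tendsto' (by fun_prop) _ _ (by ring))

lemma strongConvexOn_mul_sq_norm_sub [InnerProductSpace ℝ E] {s : Set E} (hs : Convex ℝ s)
    (c : ℝ) (x : E) : StrongConvexOn s (2 * c) fun w => c * ‖x - w‖ ^ 2 := by
  rw [strongConvexOn_iff_convex]
  have hlin : (fun w => c * ‖x - w‖ ^ 2 - 2 * c / 2 * ‖w‖ ^ 2)
      = fun w => (-(2 * c)) • innerₛₗ ℝ x w + c * ‖x‖ ^ 2 := by
    ext w
    simp only [norm_sub_sq_real, innerₛₗ_apply_apply, smul_eq_mul]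
    ring
  rw [hlin]
  exact ((-(2 * c)) • innerₛₗ ℝ x).convexOn hs |>.add_const _

variable [InnerProductSpace ℝ E] {g : E → ℝ} {lam : ℝ} {x z : E}

lemma ConvexOn.sq_norm_sub_le_of_isMinOn_prox (hg : ConvexOn ℝ univ g) (hlam : 0 < lam)
    (hz : IsMinOn (fun w => g w + 1 / (2 * lam) * ‖x - w‖ ^ 2) univ z) (y : E) :
    ‖z - y‖ ^ 2 ≤ ‖x - y‖ ^ 2 - ‖x - z‖ ^ 2 + 2 * lam * (g y - g z) := by
  have hstrong : StrongConvexOn univ (2 * (1 / (2 * lam)))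
      fun w => g w + 1 / (2 * lam) * ‖x - w‖ ^ 2 :=
    (hg.uniformConvexOn_zero.add (strongConvexOn_mul_sq_norm_sub convex_univ _ x)).mono
      fun r => by simp
  have hgrowth := hstrong.add_sq_norm_sub_le_of_isMinOn hz (mem_univ z) (mem_univ y)
  rw [norm_sub_rev y z] at hgrowth
  field_simp at hgrowth
  linarith

lemma ConvexOn.sq_norm_sub_le_of_isMinOn_prox_of_le (hg : ConvexOn ℝ univ g) (hlam : 0 < lam)
    (hz : IsMinOn (fun w => g w + 1 / (2 * lam) * ‖x - w‖ ^ 2) univ z)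
    {K : ℝ} (hK : g x - g z ≤ K * ‖x - z‖) (y : E) :
    ‖z - y‖ ^ 2 ≤ ‖x - y‖ ^ 2 + lam ^ 2 * K ^ 2 - 2 * lam * (g x - g y) := by
  have := hg.sq_norm_sub_le_of_isMinOn_prox hlam hz y
  nlinarith [sq_nonneg (‖x - z‖ - lam * K),
    mul_le_mul_of_nonneg_left hK (by positivity : 0 ≤ 2 * lam)]

lemma ConvexOn.sq_norm_sub_le_of_isMinOn_prox_of_growth (hg : ConvexOn ℝ univ g)
    (hlam : 0 < lam) (hz : IsMinOn (fun w => g w + 1 / (2 * lam) * ‖x - w‖ ^ 2) univ z)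
    {l : ℝ} {p : E} (hgrowth : g x - g z ≤ l * (1 + ‖x - p‖) * ‖x - z‖) (y : E) :
    ‖z - y‖ ^ 2 ≤ ‖x - y‖ ^ 2 + 2 * (1 + ‖y - p‖) ^ 2 * lam ^ 2 * (‖x - y‖ ^ 2 + 1) * l ^ 2
      - 2 * lam * (g x - g y) := by
  have hprox := hg.sq_norm_sub_le_of_isMinOn_prox_of_le hlam hz hgrowth y
  have hK : lam ^ 2 * (l * (1 + ‖x - p‖)) ^ 2
      ≤ lam ^ 2 * l ^ 2 * (2 * (1 + ‖y - p‖) ^ 2 * (‖x - y‖ ^ 2 + 1)) := by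
    rw [mul_pow, ← mul_assoc]
    gcongr
    exact one_add_norm_sub_sq_le x y p
  linarith

end StrongConvexity

theorem sppa_one_step_estimate_general {d : ℕ}
    {S : Type*} [MeasurableSpace S] (μ : Measure S) [IsProbabilityMeasure μ]
    (f : EuclideanSpace ℝ (Fin d) → S → ℝ)
    (hconv : ∀ ξ : S, ConvexOn ℝ Set.univ fun x => f x ξ)
    (hint : ∀ x : EuclideanSpace ℝ (Fin d), Integrable (fun ξ => f x ξ) μ)
    (F : EuclideanSpace ℝ (Fin d) → ℝ) (hF : ∀ x, F x = ∫ ξ, f x ξ ∂μ)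
    (p : EuclideanSpace ℝ (Fin d)) (L : S → ℝ)
    (hL2 : MemLp L 2 μ)
    (hgrowth : ∀ (u v : EuclideanSpace ℝ (Fin d)) (ξ : S),
      f u ξ - f v ξ ≤ L ξ * (1 + ‖u - p‖) * ‖u - v‖)
    (J : ℝ → EuclideanSpace ℝ (Fin d) → S → EuclideanSpace ℝ (Fin d))
    (hJ : ∀ lam : ℝ, 0 < lam → ∀ (x : EuclideanSpace ℝ (Fin d)) (ξ : S),
      ∀ y : EuclideanSpace ℝ (Fin d),
        f (J lam x ξ) ξ + (1 / (2 * lam)) * ‖x - J lam x ξ‖ ^ 2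
          ≤ f y ξ + (1 / (2 * lam)) * ‖x - y‖ ^ 2) :
    ∀ y : EuclideanSpace ℝ (Fin d), ∃ C : ℝ, 0 < C ∧
      ∀ lam : ℝ, 0 < lam → ∀ x : EuclideanSpace ℝ (Fin d),
        ∫ ξ, ‖J lam x ξ - y‖ ^ 2 ∂μ ≤
          (1 + 2 * C * lam ^ 2 * ∫ ξ, L ξ ^ 2 ∂μ) * ‖x - y‖ ^ 2
            - 2 * lam * (F x - F y) + 2 * C * lam ^ 2 * ∫ ξ, L ξ ^ 2 ∂μ := by
  intro y
  set C := (1 + ‖y - p‖) ^ 2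
  refine ⟨C, by positivity, fun lam hlam x => ?_⟩
  have hpointwise : ∀ ξ, ‖J lam x ξ - y‖ ^ 2 ≤ ‖x - y‖ ^ 2
      + 2 * C * lam ^ 2 * (‖x - y‖ ^ 2 + 1) * L ξ ^ 2 - 2 * lam * (f x ξ - f y ξ) := fun ξ =>
    (hconv ξ).sq_norm_sub_le_of_isMinOn_prox_of_growth hlam (fun w _ => hJ lam hlam x ξ w)
      (hgrowth x _ ξ) y
  have hL2sq : Integrable (fun ξ => L ξ ^ 2) μ := hL2.integrable_sq
  have hquad : Integrable
      (fun ξ => ‖x - y‖ ^ 2 + 2 * C * lam ^ 2 * (‖x - y‖ ^ 2 + 1) * L ξ ^ 2) μ :=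
    (integrable_const _).add (hL2sq.const_mul _)
  have hdiff : Integrable (fun ξ => 2 * lam * (f x ξ - f y ξ)) μ :=
    ((hint x).sub (hint y)).const_mul _
  calc ∫ ξ, ‖J lam x ξ - y‖ ^ 2 ∂μ
      ≤ ∫ ξ, (‖x - y‖ ^ 2 + 2 * C * lam ^ 2 * (‖x - y‖ ^ 2 + 1) * L ξ ^ 2
          - 2 * lam * (f x ξ - f y ξ)) ∂μ :=
        integral_mono_of_nonneg (ae_of_all _ fun _ => by positivity) (hquad.sub hdiff)
          (ae_of_all _ hpointwise)
    _ = _ := by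
        rw [integral_sub hquad hdiff, integral_add (integrable_const _) (hL2sq.const_mul _),
          integral_const, integral_const_mul, integral_const_mul, integral_sub (hint x) (hint y),
          hF x, hF y, probReal_univ, one_smul]
        ring

/-- One-step expected-decrease estimate for the stochastic proximal point algorithm
(inequality (3.2) in the proof of Theorem 3.1): for every `y` there is a constant
`C > 0` (depending only on `y` and `p`) such that for all `λ > 0` and all `x`,
`∫ ‖J_λ^ξ x - y‖² dμ ≤ (1 + 2Cλ²∫L²) ‖x - y‖² - 2λ(F x - F y) + 2Cλ²∫L²`. -/
theorem sppa_one_step_estimate {d : ℕ}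
    {S : Type*} [MeasurableSpace S] (μ : Measure S) [IsProbabilityMeasure μ]
    (f : EuclideanSpace ℝ (Fin d) → S → ℝ)
    (hconv : ∀ ξ : S, ConvexOn ℝ Set.univ fun x => f x ξ)
    (hint : ∀ x : EuclideanSpace ℝ (Fin d), Integrable (fun ξ => f x ξ) μ)
    (F : EuclideanSpace ℝ (Fin d) → ℝ) (hF : ∀ x, F x = ∫ ξ, f x ξ ∂μ)
    (p : EuclideanSpace ℝ (Fin d)) (L : S → ℝ) (hLpos : ∀ ξ, 0 < L ξ)
    (hL2 : MemLp L 2 μ)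
    (hgrowth : ∀ (u v : EuclideanSpace ℝ (Fin d)) (ξ : S),
      f u ξ - f v ξ ≤ L ξ * (1 + ‖u - p‖) * ‖u - v‖)
    (J : ℝ → EuclideanSpace ℝ (Fin d) → S → EuclideanSpace ℝ (Fin d))
    (hJ : ∀ lam : ℝ, 0 < lam → ∀ (x : EuclideanSpace ℝ (Fin d)) (ξ : S),
      ∀ y : EuclideanSpace ℝ (Fin d),
        f (J lam x ξ) ξ + (1 / (2 * lam)) * ‖x - J lam x ξ‖ ^ 2
          ≤ f y ξ + (1 / (2 * lam)) * ‖x - y‖ ^ 2) :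
    ∀ y : EuclideanSpace ℝ (Fin d), ∃ C : ℝ, 0 < C ∧
      ∀ lam : ℝ, 0 < lam → ∀ x : EuclideanSpace ℝ (Fin d),
        ∫ ξ, ‖J lam x ξ - y‖ ^ 2 ∂μ ≤
          (1 + 2 * C * lam ^ 2 * ∫ ξ, L ξ ^ 2 ∂μ) * ‖x - y‖ ^ 2
            - 2 * lam * (F x - F y) + 2 * C * lam ^ 2 * ∫ ξ, L ξ ^ 2 ∂μ :=
  sppa_one_step_estimate_general μ f hconv hint F hF p L hL2 hgrowth J hJ
end
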